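/- Let i ≥ 1, let k be an integer with 0 ≤ k ≤ i−1, and let w be a word belonging to J_l for some l ≥ 1. Then β_{i+4}(w a_1 a_2 ⋯ a_{i−k} a_0^k) = 2i − k + 3, where a_0^k denotes the letter a_0 repeated k times. (Lemma 5.5(ii) of the paper.) -/
import Mathlib


/-- The Jacquard languages: `Jacquard 0 = {ε}`, `Jacquard 1 = {a₀}`, and, for `n ≥ 2`,
`Jacquard n = Jacquard (n-1)·a₀ ∪ ⋃_{1 ≤ j ≤ n-1} Jacquard (n-j)·(a₁a₂⋯a_j)`,
where a letter `a_j` is modeled by the natural number `j` and a word by a list. -/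
def Jacquard : ℕ → Set (List ℕ)
  | 0 => {[]}
  | 1 => {[0]}
  | n + 2 =>
      ((· ++ [0]) '' Jacquard (n + 1)) ∪
        ⋃ (j : ℕ) (_ : 1 ≤ j ∧ j ≤ n + 1),
          (· ++ (List.range j).map (· + 1)) '' Jacquard (n + 2 - j)
  termination_by n => n
  decreasing_by all_goals omega

/-- Jean's functions `β_i` on words (the shift `w'` of a word is `w.dropLast`):
`β₂ = 1`, `β₃ = 2`, `β₄ = 3`, and, for `i ≥ 5`,
`β_i(w) = β_{i-1}(w') + β_{i-2}(w'')` if the last letter of `w` is `a₁`,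
`β_i(w) = 2β_{i-1}(w') - β_{i-2}(w'')` if the last letter of `w` is `a_k`, `k ≥ 2`,
`β_i(w) = β_{i-1}(w') + 1` otherwise (i.e. `w` empty or ending with `a₀`).
(The unused values `β₀` and `β₁` are set to `0`.) -/
def beta : ℕ → List ℕ → ℤ
  | 0, _ => 0
  | 1, _ => 0
  | 2, _ => 1
  | 3, _ => 2
  | 4, _ => 3
  | i + 5, w =>
      match w.getLast? with
      | some 1 => beta (i + 4) w.dropLast + beta (i + 3) w.dropLast.dropLast
      | some (_ + 2) => 2 * beta (i + 4) w.dropLast - beta (i + 3) w.dropLast.dropLast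
      | _ => beta (i + 4) w.dropLast + 1

lemma lemA (m : ℕ) (w : List ℕ) :
    beta (m + 4) (w ++ (List.range m).map (· + 1)) = 2 * (m : ℤ) + 3 := by
  induction m using Nat.twoStepInduction with
  | zero => simp [beta]
  | one =>
      have h : (List.range 1).map (· + 1) = [1] := rfl
      rw [h, show (1 : ℕ) + 4 = 0 + 5 from rfl]
      simp [beta, List.getLast?_concat, List.dropLast_concat]
  | more m ih1 ih2 =>
      have h2 : (List.range (m + 2)).map (· + 1)
          = (List.range (m + 1)).map (· + 1) ++ [m + 2] := by
        rw [List.range_succ, List.map_append]; rfl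
      have h1 : (List.range (m + 1)).map (· + 1)
          = (List.range m).map (· + 1) ++ [m + 1] := by
        rw [List.range_succ, List.map_append]; rfl
      rw [h2, show m + 2 + 4 = m + 1 + 5 from rfl, ← List.append_assoc]
      rw [show beta (m + 1 + 5) ((w ++ (List.range (m+1)).map (· + 1)) ++ [m + 2])
          = 2 * beta (m + 1 + 4) ((w ++ (List.range (m+1)).map (· + 1)) ++ [m + 2]).dropLast
            - beta (m + 1 + 3) ((w ++ (List.range (m+1)).map (· + 1)) ++ [m + 2]).dropLast.dropLast
          from by rw [beta]; simp [List.getLast?_concat]]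
      rw [List.dropLast_concat]
      have hd : (w ++ (List.range (m+1)).map (· + 1)).dropLast
          = w ++ (List.range m).map (· + 1) := by
        rw [h1, ← List.append_assoc, List.dropLast_concat]
      rw [hd]
      rw [ih2, show m + 1 + 3 = m + 4 from rfl, ih1]
      push_cast
      ring

lemma lemB (k m : ℕ) (w : List ℕ) :
    beta (m + k + 4) (w ++ (List.range m).map (· + 1) ++ List.replicate k 0)
      = 2 * (m : ℤ) + k + 3 := by
  induction k with
  | zero => simpa using lemA m w
  | succ k ih =>
      rw [List.replicate_succ' , show m + (k + 1) + 4 = m + k + 5 from rfl,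
        ← List.append_assoc]
      rw [show beta (m + k + 5) ((w ++ (List.range m).map (· + 1) ++ List.replicate k 0) ++ [0])
          = beta (m + k + 4) ((w ++ (List.range m).map (· + 1) ++ List.replicate k 0) ++ [0]).dropLast + 1
          from by rw [beta]; simp [List.getLast?_concat]]
      rw [List.dropLast_concat, ih]
      push_cast
      ring

/-- Lemma 5.5(ii): for `i ≥ 1`, `0 ≤ k ≤ i-1`, and any word `w` in some Jacquard
language `J_l`, `l ≥ 1`, `β_{i+4}(w a₁a₂⋯a_{i-k} a₀^k) = 2i - k + 3`. -/
theorem beta_append_ones_zeros (i k : ℕ) (hi : 1 ≤ i) (hk : k ≤ i - 1)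
    (l : ℕ) (hl : 1 ≤ l) (w : List ℕ) (hw : w ∈ Jacquard l) :
    beta (i + 4) (w ++ (List.range (i - k)).map (· + 1) ++ List.replicate k 0) =
      2 * (i : ℤ) - (k : ℤ) + 3 := by
  have hik : i - k + k = i := by omega
  have h1 := lemB k (i - k) w
  rw [hik] at h1
  rw [h1]
  have h2 : ((i - k : ℕ) : ℤ) = (i : ℤ) - k := by omega
  rw [h2]; ring
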